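/- arXiv:2501.08467 — 4 statements merged into one kernel-verified Lean document; each statement's English description precedes it below -/
import Mathlib

section
/- Let p, q be natural numbers with q ≤ p, and let γ ∈ ℝ^{p×q} satisfy Assumption A3 (every submatrix of γ formed by any q of its rows is invertible). Let ξ ∈ ℝ^p, δ₀ ∈ ℝ^q and set β₀ = ξ − γδ₀, and assume 2‖β₀‖₀ ≤ p − q. Let R ∈ ℝ^{q×q} be an orthogonal matrix and set γ̃ = γR. Then for any δ̃ ∈ ℝ^q minimizing the ℓ0 norm ‖ξ − γ̃δ‖₀ over δ ∈ ℝ^q (i.e., such that ‖ξ − γ̃δ̃‖₀ ≤ ‖ξ − γ̃δ‖₀ for all δ ∈ ℝ^q), one has ξ − γ̃δ̃ = β₀. -/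
open Matrix

/-- The ℓ0 "norm": number of nonzero entries of a vector. -/
noncomputable def l0norm {p : ℕ} (v : Fin p → ℝ) : ℕ :=
  (Finset.univ.filter (fun i => v i ≠ 0)).card

/-- Assumption A3: every submatrix of γ formed by any q of its rows is invertible. -/
def AssumptionA3 {p q : ℕ} (γ : Matrix (Fin p) (Fin q) ℝ) : Prop :=
  ∀ f : Fin q → Fin p, Function.Injective f → IsUnit (γ.submatrix f id)

lemma l0_sub {p : ℕ} (a b : Fin p → ℝ) : l0norm (a - b) ≤ l0norm a + l0norm b := by
  classical
  refine le_trans (Finset.card_le_card ?_) (Finset.card_union_le _ _)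
  intro i hi
  simp only [Finset.mem_filter, Finset.mem_union, Finset.mem_univ, true_and, Pi.sub_apply] at *
  by_contra h
  push_neg at h
  exact hi (by rw [h.1, h.2, sub_zero])

theorem stmt_0 {p q : ℕ} (hqp : q ≤ p)
    (γ : Matrix (Fin p) (Fin q) ℝ) (hA3 : AssumptionA3 γ)
    (ξ : Fin p → ℝ) (δ₀ : Fin q → ℝ) (β₀ : Fin p → ℝ)
    (hβ₀ : β₀ = ξ - γ.mulVec δ₀)
    (hsparse : 2 * l0norm β₀ ≤ p - q)
    (R : Matrix (Fin q) (Fin q) ℝ) (hR : Rᵀ * R = 1)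
    (δt : Fin q → ℝ)
    (hmin : ∀ δ : Fin q → ℝ,
      l0norm (ξ - (γ * R).mulVec δt) ≤ l0norm (ξ - (γ * R).mulVec δ)) :
    ξ - (γ * R).mulVec δt = β₀ := by
  classical
  have hRR : R * Rᵀ = 1 := mul_eq_one_comm.mp hR
  set δ₀' := Rᵀ.mulVec δ₀ with hδ₀'
  have hkey : (γ * R).mulVec δ₀' = γ.mulVec δ₀ := by
    rw [hδ₀', Matrix.mulVec_mulVec, Matrix.mul_assoc, hRR, Matrix.mul_one]
  set u := ξ - (γ * R).mulVec δt with hu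
  have hle : l0norm u ≤ l0norm β₀ := by
    have := hmin δ₀'
    rwa [hkey, ← hβ₀] at this
  set v := δt - δ₀' with hv
  have hw : β₀ - u = (γ * R).mulVec v := by
    rw [hβ₀, hu, ← hkey, hv, Matrix.mulVec_sub]
    abel
  have hcardw : l0norm (β₀ - u) ≤ p - q := by
    calc l0norm (β₀ - u) ≤ l0norm β₀ + l0norm u := l0_sub _ _
    _ ≤ 2 * l0norm β₀ := by omega
    _ ≤ p - q := hsparse
  set S := Finset.univ.filter (fun i => (β₀ - u) i = 0) with hS
  have hScard : q ≤ S.card := by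
    have h1 : S.card + l0norm (β₀ - u) = p := by
      rw [hS, l0norm]
      have := Finset.card_filter_add_card_filter_not
        (s := (Finset.univ : Finset (Fin p))) (p := fun i => (β₀ - u) i = 0)
      simpa using this
    omega
  obtain ⟨s, hsS, hscard⟩ := Finset.exists_subset_card_eq hScard
  set f := s.orderEmbOfFin hscard with hf
  have hfinj : Function.Injective f := (s.orderEmbOfFin hscard).injective
  have hAeq : (γ * R).submatrix f id = (γ.submatrix f id) * R := by
    ext i j
    simp [Matrix.mul_apply, Matrix.submatrix_apply]
  have hAunit : IsUnit ((γ * R).submatrix f id) := by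
    rw [hAeq]
    exact (hA3 f hfinj).mul ⟨⟨R, Rᵀ, hRR, hR⟩, rfl⟩
  have hAv : ((γ * R).submatrix f id).mulVec v = 0 := by
    ext j
    have hmem : f j ∈ S := hsS (s.orderEmbOfFin_mem hscard j)
    have h0 : (β₀ - u) (f j) = 0 := by
      rw [hS] at hmem
      exact (Finset.mem_filter.mp hmem).2
    rw [hw] at h0
    simpa [Matrix.mulVec, dotProduct, Matrix.submatrix_apply] using h0
  have hv0 : v = 0 := by
    set A := (γ * R).submatrix f id with hA
    have hdet : IsUnit A.det := (Matrix.isUnit_iff_isUnit_det A).mp hAunit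
    have := congrArg (fun x => A⁻¹.mulVec x) hAv
    simpa [Matrix.mulVec_mulVec, Matrix.nonsing_inv_mul A hdet] using this
  have : β₀ - u = 0 := by rw [hw, hv0, Matrix.mulVec_zero]
  have : u = β₀ := by
    have := sub_eq_zero.mp this
    exact this.symm
  exact this
end

section
/- Let p, q be natural numbers with q ≤ p, and let γ ∈ ℝ^{p×q} satisfy Assumption A3 (every submatrix of γ formed by any q of its rows is invertible). Let ξ ∈ ℝ^p and δ₀ ∈ ℝ^q, set β₀ = ξ − γδ₀, and assume 2‖β₀‖₀ ≤ p − q. Then for every δ₁ ∈ ℝ^q with ‖ξ − γδ₁‖₀ ≤ ‖β₀‖₀, one has δ₁ = δ₀ (and hence ξ − γδ₁ = β₀). -/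
open Matrix

theorem stmt_1 {p q : ℕ} (hqp : q ≤ p)
    (γ : Matrix (Fin p) (Fin q) ℝ) (hA3 : AssumptionA3 γ)
    (ξ : Fin p → ℝ) (δ₀ : Fin q → ℝ) (β₀ : Fin p → ℝ)
    (hβ₀ : β₀ = ξ - γ.mulVec δ₀)
    (hsparse : 2 * l0norm β₀ ≤ p - q) :
    ∀ δ₁ : Fin q → ℝ, l0norm (ξ - γ.mulVec δ₁) ≤ l0norm β₀ →
      δ₁ = δ₀ ∧ ξ - γ.mulVec δ₁ = β₀ := by
  intro δ₁ hδ₁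
  set β₁ : Fin p → ℝ := ξ - γ.mulVec δ₁ with hβ₁
  set S : Finset (Fin p) :=
    (Finset.univ.filter (fun i => β₀ i ≠ 0)) ∪ (Finset.univ.filter (fun i => β₁ i ≠ 0)) with hS
  have hScard : S.card ≤ p - q := by
    calc S.card ≤ l0norm β₀ + l0norm β₁ := Finset.card_union_le _ _
    _ ≤ l0norm β₀ + l0norm β₀ := by omega
    _ ≤ p - q := by omega
  have hZcard : q ≤ Sᶜ.card := by
    have := Finset.card_compl S
    simp only [Fintype.card_fin] at this
    omega
  obtain ⟨T, hTsub, hTcard⟩ := Finset.exists_subset_card_eq hZcard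
  have hTcard' : T.card = q := hTcard
  let e := T.orderIsoOfFin hTcard'
  let f : Fin q → Fin p := fun i => (e i : Fin p)
  have hf : Function.Injective f := fun a b hab => e.injective (Subtype.ext hab)
  have hfZ : ∀ i, f i ∈ Sᶜ := fun i => hTsub (e i).2
  have hdiff : γ.mulVec (δ₀ - δ₁) = β₁ - β₀ := by
    rw [Matrix.mulVec_sub, hβ₀, hβ₁]
    abel
  have hzero : (γ.submatrix f id).mulVec (δ₀ - δ₁) = 0 := by
    funext i
    have hmem := hfZ i
    simp only [Finset.mem_compl, hS, Finset.mem_union, Finset.mem_filter, Finset.mem_univ,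
      true_and, not_or, not_not] at hmem
    have : γ.mulVec (δ₀ - δ₁) (f i) = 0 := by
      rw [hdiff]; simp [hmem.1, hmem.2]
    simpa [Matrix.submatrix_mulVec_equiv, Matrix.mulVec, Matrix.submatrix, dotProduct]
      using this
  have hunit := hA3 f hf
  have hδ : δ₀ - δ₁ = 0 := by
    have hinj : Function.Injective (γ.submatrix f id).mulVec :=
      (Matrix.mulVec_injective_iff_isUnit).mpr hunit
    have := hinj (a₁ := δ₀ - δ₁) (a₂ := 0) (by rw [hzero, Matrix.mulVec_zero])
    exact this
  have hδeq : δ₁ = δ₀ := by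
    have := sub_eq_zero.mp hδ
    exact this.symm
  exact ⟨hδeq, by rw [hβ₁, hδeq, ← hβ₀]⟩
end

section
/- Let p, q be natural numbers with q ≤ p, and let γ ∈ ℝ^{p×q} satisfy Assumption A3 (every submatrix of γ formed by any q of its rows is invertible). Let ξ ∈ ℝ^p and δ₀ ∈ ℝ^q, set β₀ = ξ − γδ₀, and assume 2‖β₀‖₀ ≤ p − q. Then for every δ₁ ∈ ℝ^q with δ₁ ≠ δ₀, the vector ξ − γδ₁ satisfies 2‖ξ − γδ₁‖₀ > p − q; in particular β₀ strictly minimizes the ℓ0 norm of ξ − γδ over all δ ≠ δ₀. -/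
open Matrix

theorem stmt_2 {p q : ℕ} (hqp : q ≤ p)
    (γ : Matrix (Fin p) (Fin q) ℝ) (hA3 : AssumptionA3 γ)
    (ξ : Fin p → ℝ) (δ₀ : Fin q → ℝ) (β₀ : Fin p → ℝ)
    (hβ₀ : β₀ = ξ - γ.mulVec δ₀)
    (hsparse : 2 * l0norm β₀ ≤ p - q) :
    ∀ δ₁ : Fin q → ℝ, δ₁ ≠ δ₀ →
      2 * l0norm (ξ - γ.mulVec δ₁) > p - q ∧
      l0norm β₀ < l0norm (ξ - γ.mulVec δ₁) := by
  intro δ₁ hne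
  set β₁ : Fin p → ℝ := ξ - γ.mulVec δ₁ with hβ₁
  set s₀ := l0norm β₀
  set s₁ := l0norm β₁
  -- key claim
  have key : p - q < s₀ + s₁ := by
    by_contra h
    push_neg at h
    -- common zero set
    set Z : Finset (Fin p) := Finset.univ.filter (fun i => β₀ i = 0 ∧ β₁ i = 0) with hZ
    have hZcard : q ≤ Z.card := by
      have h0 : (Finset.univ.filter (fun i => ¬ β₀ i = 0)).card = s₀ := rfl
      have h1 : (Finset.univ.filter (fun i => ¬ β₁ i = 0)).card = s₁ := rfl
      have hc : Z.card + ((Finset.univ.filter (fun i => ¬ β₀ i = 0)) ∪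
          (Finset.univ.filter (fun i => ¬ β₁ i = 0))).card = p := by
        have : Z = ((Finset.univ.filter (fun i => ¬ β₀ i = 0)) ∪
            (Finset.univ.filter (fun i => ¬ β₁ i = 0)))ᶜ := by
          ext i; simp [hZ, not_or]
        rw [this, Finset.card_compl]
        have := Finset.card_le_univ ((Finset.univ.filter (fun i => ¬ β₀ i = 0)) ∪
            (Finset.univ.filter (fun i => ¬ β₁ i = 0)))
        simp only [Finset.card_univ, Fintype.card_fin] at this ⊢
        omega
      have hun : ((Finset.univ.filter (fun i => ¬ β₀ i = 0)) ∪
          (Finset.univ.filter (fun i => ¬ β₁ i = 0))).card ≤ s₀ + s₁ := by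
        calc _ ≤ _ := Finset.card_union_le _ _
          _ = s₀ + s₁ := by rw [h0, h1]
      omega
    obtain ⟨t, htZ, htcard⟩ := Finset.exists_subset_card_eq hZcard
    set f : Fin q → Fin p := fun i => (t.orderIsoOfFin htcard i : Fin p) with hf
    have hfinj : Function.Injective f := fun a b hab => by
      have := (t.orderIsoOfFin htcard).injective (Subtype.ext hab); exact this
    have hunit := hA3 f hfinj
    have hfz : ∀ i, β₀ (f i) = 0 ∧ β₁ (f i) = 0 := by
      intro i
      have : f i ∈ Z := htZ (t.orderIsoOfFin htcard i).2
      simpa [hZ] using this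
    have hmv : (γ.submatrix f id).mulVec (δ₁ - δ₀) = 0 := by
      funext i
      have h2 : γ.mulVec (δ₁ - δ₀) (f i) = 0 := by
        have := (hfz i).1
        have h3 := (hfz i).2
        rw [hβ₀] at this
        rw [hβ₁] at h3
        have : γ.mulVec δ₁ (f i) - γ.mulVec δ₀ (f i) = 0 := by
          simp only [Pi.sub_apply] at this h3
          linarith
        simpa [Matrix.mulVec_sub] using this
      simpa [Matrix.submatrix_mulVec_equiv, Matrix.mulVec, Matrix.submatrix,
        dotProduct] using h2
    have : δ₁ - δ₀ = 0 := by
      obtain ⟨u, hu⟩ := hunit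
      have hinv : (↑u⁻¹ : Matrix (Fin q) (Fin q) ℝ) * (γ.submatrix f id) = 1 := by
        rw [← hu]; exact u.inv_mul
      calc δ₁ - δ₀ = ((↑u⁻¹ : Matrix (Fin q) (Fin q) ℝ) * (γ.submatrix f id)).mulVec (δ₁ - δ₀) := by
            rw [hinv, Matrix.one_mulVec]
        _ = (↑u⁻¹ : Matrix (Fin q) (Fin q) ℝ).mulVec ((γ.submatrix f id).mulVec (δ₁ - δ₀)) := by
            rw [Matrix.mulVec_mulVec]
        _ = 0 := by rw [hmv, Matrix.mulVec_zero]
    exact hne (by rwa [sub_eq_zero] at this)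
  constructor <;> omega
end

section
/- Let p, q, r be natural numbers with q + r ≤ p, and let γ ∈ ℝ^{p×q} satisfy Assumption A3′: every submatrix of γ consisting of q + r rows has full column rank q. Let ξ ∈ ℝ^p and δ₀ ∈ ℝ^q, set β₀ = ξ − γδ₀, and assume 2‖β₀‖₀ ≤ p − q − r (Assumption A4′). Then for every δ₁ ∈ ℝ^q with ‖ξ − γδ₁‖₀ ≤ ‖β₀‖₀, one has δ₁ = δ₀ and hence ξ − γδ₁ = β₀; that is, the causal effect β₀ is identified as the unique sparsest vector of the form ξ − γδ. -/
/-! If `ξ - γ δ₁` is at most as sparse as `β₀ = ξ - γ δ₀`, then `γ (δ₀ - δ₁)` is their difference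
and so has at most `2 ‖β₀‖₀ ≤ p - q - r` nonzero entries. It therefore vanishes on at least `q + r`
rows, and by Assumption A3′ the columns of `γ` restricted to those rows are linearly independent,
forcing `δ₀ = δ₁`. -/

open Matrix

/-- Assumption A3′ with parameter r: every submatrix of γ consisting of q + r rows
has full column rank q, i.e. its columns are linearly independent. -/
def AssumptionA3' {p q : ℕ} (r : ℕ) (γ : Matrix (Fin p) (Fin q) ℝ) : Prop :=
  ∀ f : Fin (q + r) → Fin p, Function.Injective f →
    LinearIndependent ℝ (fun j : Fin q => (γ.submatrix f id)ᵀ j)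

open Finset

theorem l0norm_sub_le {p : ℕ} (u v : Fin p → ℝ) : l0norm (u - v) ≤ l0norm u + l0norm v := by
  unfold l0norm
  calc #{i | (u - v) i ≠ 0} ≤ #(univ.filter (u · ≠ 0) ∪ univ.filter (v · ≠ 0)) := by
        refine card_le_card fun i hi => ?_
        simp only [mem_filter, mem_univ, true_and, mem_union, Pi.sub_apply] at hi ⊢
        by_contra! h
        simp [h.1, h.2] at hi
    _ ≤ #{i | u i ≠ 0} + #{i | v i ≠ 0} := card_union_le _ _

theorem l0norm_add_card_filter_eq_zero {p : ℕ} (v : Fin p → ℝ) :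
    l0norm v + #{i | v i = 0} = p := by
  rw [l0norm, add_comm, card_filter_add_card_filter_not, card_univ, Fintype.card_fin]

theorem AssumptionA3'.eq_zero_of_mulVec_eq_zero_on {p q r : ℕ} {γ : Matrix (Fin p) (Fin q) ℝ}
    (hγ : AssumptionA3' r γ) {v : Fin q → ℝ} {S : Finset (Fin p)} (hS : q + r ≤ #S)
    (hv : ∀ i ∈ S, (γ *ᵥ v) i = 0) : v = 0 := by
  obtain ⟨T, hTS, hT⟩ := exists_subset_card_eq hS
  let f := T.orderEmbOfFin hT
  have hinj : Function.Injective (γ.submatrix f id).mulVec :=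
    mulVec_injective_iff.mpr (hγ f f.injective)
  refine hinj ?_
  ext i
  simpa [mulVec, dotProduct] using hv (f i) (hTS (T.orderEmbOfFin_mem hT i))

theorem AssumptionA3'.eq_zero_of_l0norm_mulVec_le {p q r : ℕ} {γ : Matrix (Fin p) (Fin q) ℝ}
    (hγ : AssumptionA3' r γ) (hqrp : q + r ≤ p) {v : Fin q → ℝ}
    (hv : l0norm (γ *ᵥ v) ≤ p - q - r) : v = 0 := by
  refine hγ.eq_zero_of_mulVec_eq_zero_on (S := {i | (γ *ᵥ v) i = 0}) ?_ fun i hi => ?_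
  · have := l0norm_add_card_filter_eq_zero (γ *ᵥ v)
    omega
  · simpa using hi

theorem stmt_6 {p q r : ℕ} (hqrp : q + r ≤ p)
    (γ : Matrix (Fin p) (Fin q) ℝ) (hA3' : AssumptionA3' r γ)
    (ξ : Fin p → ℝ) (δ₀ : Fin q → ℝ) (β₀ : Fin p → ℝ)
    (hβ₀ : β₀ = ξ - γ.mulVec δ₀)
    (hsparse : 2 * l0norm β₀ ≤ p - q - r) :
    ∀ δ₁ : Fin q → ℝ, l0norm (ξ - γ.mulVec δ₁) ≤ l0norm β₀ →
      δ₁ = δ₀ ∧ ξ - γ.mulVec δ₁ = β₀ := by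
  intro δ₁ hδ₁
  have hdiff : γ *ᵥ (δ₀ - δ₁) = (ξ - γ *ᵥ δ₁) - β₀ := by
    rw [hβ₀, mulVec_sub]
    abel
  have hsmall : l0norm (γ *ᵥ (δ₀ - δ₁)) ≤ p - q - r := by
    have := l0norm_sub_le (ξ - γ *ᵥ δ₁) β₀
    rw [hdiff]
    omega
  have hδ : δ₁ = δ₀ := (sub_eq_zero.mp (hA3'.eq_zero_of_l0norm_mulVec_le hqrp hsmall)).symm
  exact ⟨hδ, by rw [hδ, hβ₀]⟩
end
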